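/- Let q be a prime power with q > 2. If there exists an [n,k,d] linear code over F_{q²}, then there exists an [n,k,d] linear code over F_{q²} that is a Hermitian LCD code. -/

import Mathlib

/-
Scaling coordinate `i` by a unit `l i` turns a generator matrix `G` into `G * diagonal l` and the
Hermitian Gram matrix `G * Gᴴ` into `G * diagonal e * Gᴴ` with `e i = l i ^ (q + 1)`, while keeping
dimension and Hamming weights; the scaled code is Hermitian LCD once this Gram matrix is
nonsingular. Its determinant is affine in each `e i` and nonzero when `e` is the indicator of an
information set, and a function affine in each coordinate that vanishes on `{u, v} ^ n` vanishes
everywhere; so the determinant is nonzero at some `e ∈ {1, a} ^ n` for any `a ≠ 1`. For `q > 2`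
some `a = ζ ^ (q + 1)` differs from `1`, since `F_{q²}` has more than `q + 1` nonzero elements.
-/
open Matrix

/-- The Hermitian dual of a linear code over `F_{q²}`, where conjugation is
`x ↦ x ^ q`. -/
def hdualCode {F : Type*} [Field F] (q : ℕ) {ι : Type*} [Fintype ι]
    (C : Submodule F (ι → F)) : Submodule F (ι → F) where
  carrier := {b | ∀ c ∈ C, b ⬝ᵥ (fun i => (c i) ^ q) = 0}
  add_mem' := by
    intro a b ha hb c hc
    simp [add_dotProduct, ha c hc, hb c hc]
  zero_mem' := by
    intro c hc
    simp
  smul_mem' := by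
    intro r a ha c hc
    simp [smul_dotProduct, ha c hc]

/-- The minimum (Hamming) distance of a linear code. -/
noncomputable def minDist {F : Type*} [Field F] [DecidableEq F] {ι : Type*} [Fintype ι]
    (C : Submodule F (ι → F)) : ℕ :=
  sInf {w | ∃ c ∈ C, c ≠ 0 ∧ hammingNorm c = w}

theorem FiniteField.exists_ringHom_eq_pow_of_dvd_card {F : Type*} [Field F] [Fintype F] {q : ℕ}
    (hq : q ∣ Fintype.card F) : ∃ σ : F →+* F, ∀ x, σ x = x ^ q := by
  obtain ⟨N, hp, hN⟩ := FiniteField.card F (ringChar F)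
  obtain ⟨i, -, rfl⟩ := (Nat.dvd_prime_pow hp).1 (hN ▸ hq)
  have := Fact.mk hp
  exact ⟨iterateFrobenius F (ringChar F) i, fun x => iterateFrobenius_def _ _ x⟩

theorem FiniteField.exists_ne_zero_pow_ne_one {F : Type*} [Field F] [Fintype F] {m : ℕ}
    (hm : 0 < m) (hcard : m + 1 < Fintype.card F) : ∃ ζ : F, ζ ≠ 0 ∧ ζ ^ m ≠ 1 := by
  classical
  by_contra! h
  have hall : ∀ ζ : Fˣ, ζ ^ m = 1 := fun ζ => Units.ext (by simpa using h ζ ζ.ne_zero)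
  have : Fintype.card Fˣ ≤ m := by
    simpa [hall] using IsCyclic.card_pow_eq_one_le (α := Fˣ) hm
  rw [Fintype.card_units] at this
  omega

def IsMultiaffine {ι R : Type*} [DecidableEq ι] [Semiring R] (f : (ι → R) → R) : Prop :=
  ∀ (e : ι → R) (i : ι), ∃ α β : R, ∀ t, f (Function.update e i t) = α + t * β

theorem IsMultiaffine.eq_zero_of_forall_eq_or_eq {ι R : Type*} [DecidableEq ι] [Finite ι]
    [CommRing R] [NoZeroDivisors R] {f : (ι → R) → R} (hf : IsMultiaffine f) {u v : R}
    (huv : u ≠ v) (h : ∀ e, (∀ i, e i = u ∨ e i = v) → f e = 0) (e : ι → R) : f e = 0 := by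
  have := Fintype.ofFinite ι
  suffices ∀ s : Finset ι, ∀ e : ι → R, (∀ i ∉ s, e i = u ∨ e i = v) → f e = 0 from
    this Finset.univ e (by simp)
  intro s
  induction s using Finset.induction with
  | empty => exact fun e he => h e fun i => he i (Finset.notMem_empty i)
  | insert a s ha ih =>
    intro e he
    obtain ⟨α, β, hαβ⟩ := hf e a
    have hpair : ∀ t, t = u ∨ t = v → α + t * β = 0 := by
      intro t ht
      rw [← hαβ t]
      refine ih _ fun i hi => ?_
      rcases eq_or_ne i a with rfl | hia
      · simpa using ht
      · simpa [hia] using he i (by simp [hi, hia])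
    have hβ : β = 0 := by
      have : (u - v) * β = 0 := by
        linear_combination hpair u (Or.inl rfl) - hpair v (Or.inr rfl)
      exact (mul_eq_zero.1 this).resolve_left (sub_ne_zero.2 huv)
    have hα : α = 0 := by simpa [hβ] using hpair u (Or.inl rfl)
    simpa [hα, hβ] using hαβ (e a)

theorem Matrix.exists_det_add_smul_replicateCol_mul_replicateRow_eq {m R : Type*} [Fintype m]
    [DecidableEq m] [CommRing R] (A : Matrix m m R) (u w : m → R) :
    ∃ α β : R, ∀ t : R,
      (A + t • (replicateCol Unit u * replicateRow Unit w)).det = α + t * β := by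
  let N : Matrix (m ⊕ Unit) (m ⊕ Unit) R := fromBlocks A (replicateCol Unit u) 0 1
  -- By the Schur complement, the rank-one update becomes the last row of a bordered matrix.
  have hborder : ∀ t : R, (A + t • (replicateCol Unit u * replicateRow Unit w)).det =
      (N.updateRow (Sum.inr ()) (Sum.elim (-(t • w)) 1)).det := by
    intro t
    have hN : N.updateRow (Sum.inr ()) (Sum.elim (-(t • w)) 1) =
        fromBlocks A (replicateCol Unit u) (replicateRow Unit (-(t • w))) 1 := by
      ext (i | i) (j | j) <;> simp [N, updateRow_apply]
    rw [hN, det_fromBlocks_one₂₂]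
    congr 1
    ext i j
    simp only [Matrix.add_apply, Matrix.smul_apply, mul_apply, Finset.univ_unique,
      PUnit.default_eq_unit, replicateCol_apply, replicateRow_apply, Finset.sum_const,
      Finset.card_singleton, one_smul, smul_eq_mul, sub_apply, Pi.neg_apply, Pi.smul_apply, mul_neg,
      sub_neg_eq_add, add_right_inj]
    ring
  refine ⟨(N.updateRow (Sum.inr ()) (Sum.elim (0 : m → R) (1 : Unit → R))).det,
    (N.updateRow (Sum.inr ()) (Sum.elim (-w) 0)).det, fun t => ?_⟩
  have hsplit : Sum.elim (-(t • w)) 1 =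
      Sum.elim (0 : m → R) (1 : Unit → R) + t • Sum.elim (-w) (0 : Unit → R) := by
    ext (i | i) <;> simp
  rw [hborder, hsplit, det_updateRow_add, det_updateRow_smul]

theorem isMultiaffine_det_mul_diagonal_mul_transpose {κ ι R : Type*} [Fintype κ] [DecidableEq κ]
    [Fintype ι] [DecidableEq ι] [CommRing R] (B B' : Matrix κ ι R) :
    IsMultiaffine fun e : ι → R => (B * diagonal e * B'ᵀ).det := by
  intro e i
  obtain ⟨α, β, h⟩ := exists_det_add_smul_replicateCol_mul_replicateRow_eq
    (B * diagonal (Function.update e i 0) * B'ᵀ) (fun j => B j i) (fun l => B' l i)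
  refine ⟨α, β, fun t => ?_⟩
  rw [← h t, show Function.update e i t = Function.update e i 0 + Pi.single i t by
    ext x; rcases eq_or_ne x i with rfl | hx <;> simp [*]]
  refine congrArg Matrix.det ?_
  ext j l
  simp only [mul_apply, diagonal_apply, Pi.add_apply, Pi.single_apply, mul_ite, mul_add, mul_zero,
    Finset.sum_ite_eq', Finset.mem_univ, ↓reduceIte, transpose_apply, add_mul, ite_mul, zero_mul,
    Finset.sum_add_distrib, Matrix.add_apply, Matrix.smul_apply, Finset.univ_unique,
    PUnit.default_eq_unit, replicateCol_apply, replicateRow_apply, Finset.sum_const,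
    Finset.card_singleton, one_smul, smul_eq_mul, add_right_inj]
  ring

theorem Matrix.exists_injective_det_submatrix_ne_zero {κ ι K : Type*} [Fintype κ] [DecidableEq κ]
    [Fintype ι] [Field K] {B : Matrix κ ι K} (hB : LinearIndependent K B.row) :
    ∃ f : κ → ι, Function.Injective f ∧ (B.submatrix id f).det ≠ 0 := by
  have hspan : Submodule.span K (Set.range B.col) = ⊤ := by
    apply Submodule.eq_top_of_finrank_eq
    rw [← rank_eq_finrank_span_cols, hB.rank_matrix, Module.finrank_fintype_fun_eq_card]
  obtain ⟨κ', a, ha, hspan', hli⟩ := exists_linearIndependent' K B.col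
  have := Finite.of_injective a ha
  have := Fintype.ofFinite κ'
  let basis : Module.Basis κ' K (κ → K) := .mk hli (by rw [hspan', hspan])
  let ε : κ ≃ κ' := (Pi.basisFun K κ).indexEquiv basis
  refine ⟨a ∘ ε, ha.comp ε.injective, fun h => ?_⟩
  have hcols : LinearIndependent K (B.submatrix id (a ∘ ε)).col := hli.comp ε ε.injective
  rw [linearIndependent_cols_iff_isUnit, isUnit_iff_isUnit_det, h] at hcols
  exact not_isUnit_zero hcols

theorem exists_det_mul_diagonal_mul_transpose_map_ne_zero {κ ι K : Type*} [Fintype κ]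
    [DecidableEq κ] [Fintype ι] [DecidableEq ι] [Field K] (σ : K →+* K) {B : Matrix κ ι K}
    (hB : LinearIndependent K B.row) :
    ∃ e : ι → K, (B * diagonal e * (B.map σ)ᵀ).det ≠ 0 := by
  obtain ⟨f, hf, hdet⟩ := exists_injective_det_submatrix_ne_zero hB
  let s := Finset.univ.map ⟨f, hf⟩
  have hgram : B * diagonal (fun i => if i ∈ s then (1 : K) else 0) * (B.map σ)ᵀ =
      B.submatrix id f * ((B.submatrix id f).map σ)ᵀ := by
    ext j l
    simp only [mul_apply, diagonal_apply, mul_ite, mul_zero, Finset.sum_ite_eq', Finset.mem_univ,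
      if_true, mul_one, ite_mul, zero_mul, transpose_apply, map_apply]
    rw [Fintype.sum_extend_by_zero, Finset.sum_map]
    rfl
  refine ⟨fun i => if i ∈ s then 1 else 0, ?_⟩
  rw [hgram, det_mul, det_transpose, ← RingHom.mapMatrix_apply, ← RingHom.map_det]
  exact mul_ne_zero hdet ((map_ne_zero σ).2 hdet)

theorem exists_det_mul_diagonal_mul_transpose_map_ne_zero_of_ne {κ ι K : Type*} [Fintype κ]
    [DecidableEq κ] [Fintype ι] [DecidableEq ι] [Field K] (σ : K →+* K) {B : Matrix κ ι K}
    (hB : LinearIndependent K B.row) {u v : K} (huv : u ≠ v) :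
    ∃ e : ι → K, (∀ i, e i = u ∨ e i = v) ∧ (B * diagonal e * (B.map σ)ᵀ).det ≠ 0 := by
  obtain ⟨e₀, he₀⟩ := exists_det_mul_diagonal_mul_transpose_map_ne_zero σ hB
  by_contra! h
  exact he₀ ((isMultiaffine_det_mul_diagonal_mul_transpose B (B.map σ)).eq_zero_of_forall_eq_or_eq
    huv h e₀)

theorem Submodule.exists_matrix_linearIndependent_row_span_eq {F ι : Type*} [Field F] [Fintype ι]
    (C : Submodule F (ι → F)) :
    ∃ B : Matrix (Fin (Module.finrank F C)) ι F,
      LinearIndependent F B.row ∧ Submodule.span F (Set.range B.row) = C := by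
  let b := Module.finBasis F C
  refine ⟨Matrix.of fun j => (b j : ι → F), b.linearIndependent.map' C.subtype C.ker_subtype, ?_⟩
  rw [show (Matrix.of fun j => (b j : ι → F)).row = C.subtype ∘ b from rfl, Set.range_comp,
    ← Submodule.map_span, b.span_eq, Submodule.map_top, Submodule.range_subtype]

theorem inf_hdualCode_eq_bot_of_det_ne_zero {F ι κ : Type*} [Field F] [Fintype ι] [Fintype κ]
    [DecidableEq κ] {q : ℕ} (σ : F →+* F) (hσ : ∀ x, σ x = x ^ q) {C : Submodule F (ι → F)}
    {B : Matrix κ ι F} (hC : Submodule.span F (Set.range B.row) = C)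
    (hdet : (B * (B.map σ)ᵀ).det ≠ 0) : C ⊓ hdualCode q C = ⊥ := by
  rw [Submodule.eq_bot_iff]
  rintro x ⟨hxC, hxdual⟩
  obtain ⟨c, rfl⟩ : ∃ c, c ᵥ* B = x := by
    rwa [← hC, ← range_vecMulLinear] at hxC
  have hc : c ᵥ* (B * (B.map σ)ᵀ) = 0 := by
    ext l
    rw [← vecMul_vecMul]
    simpa [vecMul, dotProduct, hσ] using hxdual (B l) (hC ▸ Submodule.subset_span ⟨l, rfl⟩)
  rw [eq_zero_of_vecMul_eq_zero hdet hc, zero_vecMul]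

theorem minDist_map_linearEquiv {F ι : Type*} [Field F] [DecidableEq F] [Fintype ι]
    (C : Submodule F (ι → F)) (E : (ι → F) ≃ₗ[F] (ι → F))
    (hE : ∀ x, hammingNorm (E x) = hammingNorm x) :
    minDist (C.map (E : (ι → F) →ₗ[F] ι → F)) = minDist C := by
  unfold minDist
  congr 1
  ext w
  constructor
  · rintro ⟨_, ⟨c, hc, rfl⟩, hne, rfl⟩
    exact ⟨c, hc, by simpa using hne, (hE c).symm⟩
  · rintro ⟨c, hc, hne, rfl⟩
    exact ⟨E c, ⟨c, hc, rfl⟩, by simpa using hne, hE c⟩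

def scaleEquiv {F ι : Type*} [Field F] (l : ι → Fˣ) : (ι → F) ≃ₗ[F] (ι → F) :=
  LinearEquiv.piCongrRight fun i => LinearEquiv.smulOfUnit (l i)

theorem scaleEquiv_apply {F ι : Type*} [Field F] (l : ι → Fˣ) (x : ι → F) (i : ι) :
    scaleEquiv l x i = l i * x i := rfl

theorem hammingNorm_scaleEquiv {F ι : Type*} [Field F] [DecidableEq F] [Fintype ι] (l : ι → Fˣ)
    (x : ι → F) : hammingNorm (scaleEquiv l x) = hammingNorm x := by
  simp [hammingNorm, scaleEquiv_apply]

theorem span_range_row_mul_diagonal {F ι κ : Type*} [Field F] [Fintype ι] [DecidableEq ι]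
    (l : ι → Fˣ) (B : Matrix κ ι F) :
    Submodule.span F (Set.range (B * diagonal fun i => (l i : F)).row) =
      (Submodule.span F (Set.range B.row)).map (scaleEquiv l : (ι → F) →ₗ[F] ι → F) := by
  rw [Submodule.map_span, ← Set.range_comp]
  congr 2
  ext j i
  simp [scaleEquiv_apply, mul_comm]

theorem mul_diagonal_mul_transpose_map_mul_diagonal {F ι κ : Type*} [Field F] [Fintype ι]
    [DecidableEq ι] (σ : F →+* F) (l : ι → F) (B : Matrix κ ι F) :
    B * diagonal l * ((B * diagonal l).map σ)ᵀ =
      B * diagonal (fun i => l i * σ (l i)) * (B.map σ)ᵀ := by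
  rw [Matrix.map_mul, diagonal_map (map_zero σ), transpose_mul, diagonal_transpose,
    Matrix.mul_assoc, ← Matrix.mul_assoc (diagonal l), diagonal_mul_diagonal]
  simp only [Matrix.mul_assoc]

theorem exists_hermitian_lcd_code_of_exists_code_general
    (q : ℕ) (hq2 : 2 < q)
    {F : Type*} [Field F] [Fintype F] [DecidableEq F] (hcard : Fintype.card F = q ^ 2)
    {n k d : ℕ}
    (h : ∃ C : Submodule F (Fin n → F), Module.finrank F C = k ∧ minDist C = d) :
    ∃ C : Submodule F (Fin n → F), Module.finrank F C = k ∧ minDist C = d ∧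
      C ⊓ hdualCode q C = ⊥ := by
  obtain ⟨C, rfl, rfl⟩ := h
  obtain ⟨σ, hσ⟩ := FiniteField.exists_ringHom_eq_pow_of_dvd_card (F := F)
    (hcard ▸ dvd_pow_self q two_ne_zero)
  obtain ⟨ζ, hζ0, hζ⟩ := FiniteField.exists_ne_zero_pow_ne_one (F := F) (m := q + 1)
    (by omega) (by rw [hcard]; nlinarith)
  obtain ⟨B, hB, hC⟩ := C.exists_matrix_linearIndependent_row_span_eq
  obtain ⟨e, he, hdet⟩ := exists_det_mul_diagonal_mul_transpose_map_ne_zero_of_ne σ hB hζ.symm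
  have hnorm : ∀ i, ∃ l : Fˣ, (l : F) * σ l = e i := by
    intro i
    rcases he i with he | he
    · exact ⟨1, by simp [he]⟩
    · exact ⟨Units.mk0 ζ hζ0, by simp [he, hσ, pow_succ']⟩
  choose l hl using hnorm
  refine ⟨C.map (scaleEquiv l : (Fin n → F) →ₗ[F] Fin n → F), LinearEquiv.finrank_map_eq _ _,
    minDist_map_linearEquiv C _ (hammingNorm_scaleEquiv l), ?_⟩
  refine inf_hdualCode_eq_bot_of_det_ne_zero σ hσ (hC ▸ span_range_row_mul_diagonal l B) ?_
  rwa [mul_diagonal_mul_transpose_map_mul_diagonal, funext hl]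

/-- Let `q > 2` be a prime power.  If an `[n,k,d]` linear code over `F_{q²}`
exists, then an `[n,k,d]` Hermitian LCD linear code over `F_{q²}` exists. -/
theorem exists_hermitian_lcd_code_of_exists_code
    (q : ℕ) (hq : ∃ p m : ℕ, p.Prime ∧ 0 < m ∧ q = p ^ m) (hq2 : 2 < q)
    {F : Type*} [Field F] [Fintype F] [DecidableEq F] (hcard : Fintype.card F = q ^ 2)
    {n k d : ℕ}
    (h : ∃ C : Submodule F (Fin n → F), Module.finrank F C = k ∧ minDist C = d) :
    ∃ C : Submodule F (Fin n → F), Module.finrank F C = k ∧ minDist C = d ∧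
      C ⊓ hdualCode q C = ⊥ :=
  exists_hermitian_lcd_code_of_exists_code_general q hq2 hcard h
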